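/- Let 1 < c ∈ ℕ and V ⊆ {0,…,c-1}² with (0,0) ∈ V and |V| ≥ 1, and let X = ⋃_i X_i be the generated discrete self-similar fractal. Then the zeta-dimension of X equals log|V| / log c. -/

import Mathlib

def fractalStage (c : ℕ) (V : Set (ℕ × ℕ)) : ℕ → Set (ℕ × ℕ)
  | 0 => {(0, 0)}
  | i + 1 => fractalStage c V i ∪
      ⋃ v ∈ V, (fun x => x + c ^ i • v) '' fractalStage c V i

noncomputable def zetaDimN (A : Set (ℕ × ℕ)) : EReal :=
  Filter.atTop.limsup (fun n : ℕ =>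
    ((Real.log (max 1 ({p ∈ A | p.1 + p.2 ≤ n}.ncard : ℝ)) /
      Real.log (max 1 (n : ℝ)) : ℝ) : EReal))

/-!
Reading the stages in base `c`, the map `(v, x) ↦ x + c ^ i • v` is injective on
`V × X_i`, and `X_{i+1}` is its image because `(0,0) ∈ V`; hence `|X_i| = |V| ^ i`;
moreover the union of all stages meets the box `[0, c ^ i)²` exactly in `X_i`.
With `k = ⌊log_c n⌋`, the set `A_{≤n}` therefore lies between `X_{k-1}` and `X_{k+1}`,
so `log |A_{≤n}| = k log |V| + O(1)` and `log |A_{≤n}| / log n → log |V| / log c`;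
the limsup is this limit.
-/

open Filter Real Set Topology

theorem eq_and_eq_of_add_mul_eq_add_mul {q a b u w : ℕ} (ha : a < q) (hb : b < q)
    (h : a + q * u = b + q * w) : a = b ∧ u = w := by
  have hq : 0 < q := by omega
  obtain ⟨hu, ha'⟩ := (Nat.div_mod_unique hq).2 ⟨h, ha⟩
  obtain ⟨hw, hb'⟩ := (Nat.div_mod_unique hq).2 ⟨rfl, hb⟩
  exact ⟨ha'.symm.trans hb', hu.symm.trans hw⟩

theorem eq_and_eq_of_add_smul_eq_add_smul {q : ℕ} {x y v w : ℕ × ℕ}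
    (hx : x ∈ Iio q ×ˢ Iio q) (hy : y ∈ Iio q ×ˢ Iio q) (h : x + q • v = y + q • w) :
    x = y ∧ v = w := by
  obtain ⟨h₁, h₂⟩ := Prod.ext_iff.1 h
  obtain ⟨hxy₁, hvw₁⟩ := eq_and_eq_of_add_mul_eq_add_mul hx.1 hy.1 h₁
  obtain ⟨hxy₂, hvw₂⟩ := eq_and_eq_of_add_mul_eq_add_mul hx.2 hy.2 h₂
  exact ⟨Prod.ext hxy₁ hxy₂, Prod.ext hvw₁ hvw₂⟩

section FractalStage

variable {c : ℕ} {V : Set (ℕ × ℕ)}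

theorem fractalStage_succ_eq_image (h0 : (0, 0) ∈ V) (i : ℕ) :
    fractalStage c V (i + 1) =
      (fun p : (ℕ × ℕ) × (ℕ × ℕ) => p.2 + c ^ i • p.1) ''
        (V ×ˢ fractalStage c V i) := by
  apply Subset.antisymm
  · rintro p (hp | hp)
    · exact ⟨((0, 0), p), ⟨h0, hp⟩, by simp⟩
    · obtain ⟨v, hv, x, hx, rfl⟩ := by simpa only [mem_iUnion, mem_image] using hp
      exact ⟨(v, x), ⟨hv, hx⟩, rfl⟩
  · rintro _ ⟨⟨v, x⟩, ⟨hv, hx⟩, rfl⟩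
    exact Or.inr (mem_biUnion hv (mem_image_of_mem _ hx))

theorem fractalStage_subset_box (hV : V ⊆ Iio c ×ˢ Iio c) (h0 : (0, 0) ∈ V) (i : ℕ) :
    fractalStage c V i ⊆ Iio (c ^ i) ×ˢ Iio (c ^ i) := by
  induction i with
  | zero => simp [fractalStage]
  | succ i ih =>
    rw [fractalStage_succ_eq_image h0, pow_succ]
    rintro _ ⟨⟨v, x⟩, ⟨hv, hx⟩, rfl⟩
    exact ⟨Nat.add_mul_lt_mul_of_lt_of_lt (ih hx).1 (hV hv).1,
      Nat.add_mul_lt_mul_of_lt_of_lt (ih hx).2 (hV hv).2⟩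

theorem fractalStage_finite (hV : V ⊆ Iio c ×ˢ Iio c) (h0 : (0, 0) ∈ V) (i : ℕ) :
    (fractalStage c V i).Finite :=
  ((finite_Iio _).prod (finite_Iio _)).subset (fractalStage_subset_box hV h0 i)

theorem ncard_fractalStage (hV : V ⊆ Iio c ×ˢ Iio c) (h0 : (0, 0) ∈ V) (i : ℕ) :
    (fractalStage c V i).ncard = V.ncard ^ i := by
  induction i with
  | zero => simp [fractalStage]
  | succ i ih =>
    have hinj : InjOn (fun p : (ℕ × ℕ) × (ℕ × ℕ) => p.2 + c ^ i • p.1)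
        (V ×ˢ fractalStage c V i) := by
      rintro ⟨v, x⟩ ⟨-, hx⟩ ⟨w, y⟩ ⟨-, hy⟩ h
      obtain ⟨rfl, rfl⟩ := eq_and_eq_of_add_smul_eq_add_smul
        (fractalStage_subset_box hV h0 i hx) (fractalStage_subset_box hV h0 i hy) h
      rfl
    rw [fractalStage_succ_eq_image h0, hinj.ncard_image, ncard_prod, ih, pow_succ']

theorem fractalStage_mono : Monotone (fractalStage c V) :=
  monotone_nat_of_le_succ fun _ => subset_union_left

theorem mem_fractalStage_of_mem_box (hc : 0 < c) (hV : V ⊆ Iio c ×ˢ Iio c)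
    (h0 : (0, 0) ∈ V) {i j : ℕ} {p : ℕ × ℕ} (hp : p ∈ fractalStage c V j)
    (hbox : p ∈ Iio (c ^ i) ×ˢ Iio (c ^ i)) :
    p ∈ fractalStage c V i := by
  rcases le_total j i with hji | hij
  · exact fractalStage_mono hji hp
  induction j, hij using Nat.le_induction with
  | base => exact hp
  | succ j hij ih =>
    rw [fractalStage_succ_eq_image h0] at hp
    obtain ⟨⟨v, x⟩, ⟨-, hx⟩, hxp⟩ := hp
    have hcij : c ^ i ≤ c ^ j := Nat.pow_le_pow_right hc hij
    -- `p` is its own base-`c ^ j` expansion with top digit `0`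
    obtain ⟨rfl, -⟩ := eq_and_eq_of_add_smul_eq_add_smul (w := 0)
      (fractalStage_subset_box hV h0 j hx)
      ⟨lt_of_lt_of_le hbox.1 hcij, lt_of_lt_of_le hbox.2 hcij⟩ (by simpa using hxp)
    exact ih hx

end FractalStage

section Counting

variable {c : ℕ} {V : Set (ℕ × ℕ)}

theorem sep_iUnion_fractalStage_subset (hc : 1 < c) (hV : V ⊆ Iio c ×ˢ Iio c)
    (h0 : (0, 0) ∈ V) (n : ℕ) :
    {p ∈ ⋃ i, fractalStage c V i | p.1 + p.2 ≤ n} ⊆ fractalStage c V (Nat.log c n + 1) := by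
  rintro p ⟨hp, hpn⟩
  obtain ⟨j, hj⟩ := mem_iUnion.1 hp
  have hn : n < c ^ (Nat.log c n + 1) := Nat.lt_pow_succ_log_self hc n
  exact mem_fractalStage_of_mem_box (by omega) hV h0 hj
    ⟨show p.1 < _ by omega, show p.2 < _ by omega⟩

theorem fractalStage_subset_sep_iUnion (hc : 1 < c) (hV : V ⊆ Iio c ×ˢ Iio c)
    (h0 : (0, 0) ∈ V) {n : ℕ} (hn : c ≤ n) :
    fractalStage c V (Nat.log c n - 1) ⊆ {p ∈ ⋃ i, fractalStage c V i | p.1 + p.2 ≤ n} := by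
  intro p hp
  refine ⟨mem_iUnion.2 ⟨_, hp⟩, ?_⟩
  obtain ⟨hp₁, hp₂⟩ := fractalStage_subset_box hV h0 _ hp
  have hcn : c ^ (Nat.log c n - 1) * c ≤ n := by
    rw [← pow_succ, Nat.sub_add_cancel (Nat.log_pos hc hn)]
    exact Nat.pow_log_le_self c (by omega)
  have h2c := Nat.mul_le_mul_left (c ^ (Nat.log c n - 1)) (show 2 ≤ c by omega)
  simp only [mem_Iio] at hp₁ hp₂
  omega

theorem ncard_sep_iUnion_fractalStage_le (hc : 1 < c) (hV : V ⊆ Iio c ×ˢ Iio c)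
    (h0 : (0, 0) ∈ V) (n : ℕ) :
    {p ∈ ⋃ i, fractalStage c V i | p.1 + p.2 ≤ n}.ncard ≤ V.ncard ^ (Nat.log c n + 1) :=
  (ncard_le_ncard (sep_iUnion_fractalStage_subset hc hV h0 n)
    (fractalStage_finite hV h0 _)).trans_eq (ncard_fractalStage hV h0 _)

theorem le_ncard_sep_iUnion_fractalStage (hc : 1 < c) (hV : V ⊆ Iio c ×ˢ Iio c)
    (h0 : (0, 0) ∈ V) {n : ℕ} (hn : c ≤ n) :
    V.ncard ^ (Nat.log c n - 1) ≤ {p ∈ ⋃ i, fractalStage c V i | p.1 + p.2 ≤ n}.ncard :=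
  (ncard_fractalStage hV h0 _).symm.trans_le
    (ncard_le_ncard (fractalStage_subset_sep_iUnion hc hV h0 hn)
      ((fractalStage_finite hV h0 _).subset (sep_iUnion_fractalStage_subset hc hV h0 n)))

end Counting

theorem tendsto_div_of_abs_sub_mul_le {α : Type*} {l : Filter α} {f g : α → ℝ} {L C : ℝ}
    (hg : Tendsto g l atTop) (h : ∀ᶠ x in l, |f x - L * g x| ≤ C) :
    Tendsto (fun x => f x / g x) l (𝓝 L) := by
  have hsmall : Tendsto (fun x => (f x - L * g x) / g x) l (𝓝 0) := by
    refine squeeze_zero_norm' ?_ ((tendsto_const_nhds (x := C)).div_atTop hg)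
    filter_upwards [h, hg.eventually_gt_atTop 0] with x hx hgx
    rw [norm_div, Real.norm_of_nonneg hgx.le, Real.norm_eq_abs]
    exact div_le_div_of_nonneg_right hx hgx.le
  have hL : Tendsto (fun x => L + (f x - L * g x) / g x) l (𝓝 L) := by
    simpa using hsmall.const_add L
  refine hL.congr' ?_
  filter_upwards [hg.eventually_gt_atTop 0] with x hx
  field_simp
  ring

theorem abs_log_sub_le_of_pow_bounds {b m x a : ℝ} {k : ℕ} (hb : 1 < b) (hm : 1 ≤ m)
    (hbx : b ^ k ≤ x) (hxb : x < b ^ (k + 1)) (hma : m ^ (k - 1) ≤ a)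
    (ham : a ≤ m ^ (k + 1)) :
    |log a - log m / log b * log x| ≤ 2 * log m := by
  have hL : 0 < log b := log_pos hb
  have hM : 0 ≤ log m := log_nonneg hm
  have hx : k * log b ≤ log x := by
    rw [← log_pow]; exact log_le_log (by positivity) hbx
  have hx' : log x ≤ (k + 1) * log b := by
    rw [← Nat.cast_succ, ← log_pow]
    exact log_le_log ((by positivity : 0 < b ^ k).trans_le hbx) hxb.le
  have ha : ((k - 1 : ℕ) : ℝ) * log m ≤ log a := by
    rw [← log_pow]; exact log_le_log (by positivity) hma
  have ha' : log a ≤ (k + 1) * log m := by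
    rw [← Nat.cast_succ, ← log_pow]
    exact log_le_log (lt_of_lt_of_le (by positivity) hma) ham
  have hk : (k : ℝ) - 1 ≤ ((k - 1 : ℕ) : ℝ) := by
    rw [sub_le_iff_le_add]; exact_mod_cast (by omega : k ≤ k - 1 + 1)
  have hmx : k * log m ≤ log m / log b * log x := by
    rw [div_mul_eq_mul_div, le_div_iff₀ hL]; nlinarith
  have hmx' : log m / log b * log x ≤ (k + 1) * log m := by
    rw [div_mul_eq_mul_div, div_le_iff₀ hL]; nlinarith
  rw [abs_le]; constructor <;> nlinarith

theorem log_max_one_natCast (k : ℕ) : log (max 1 (k : ℝ)) = log k := by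
  rcases k.eq_zero_or_pos with rfl | hk
  · simp
  · rw [max_eq_right (by exact_mod_cast hk)]

theorem zetaDimN_eq_of_tendsto {A : Set (ℕ × ℕ)} {L : ℝ}
    (h : Tendsto (fun n : ℕ => log {p ∈ A | p.1 + p.2 ≤ n}.ncard / log n) atTop (𝓝 L)) :
    zetaDimN A = L := by
  simp only [zetaDimN, log_max_one_natCast]
  exact (EReal.tendsto_coe.2 h).limsup_eq

theorem zetaDim_fractal_general (c : ℕ) (hc : 1 < c) (V : Set (ℕ × ℕ))
    (hV : V ⊆ Set.Iio c ×ˢ Set.Iio c) (h0 : (0, 0) ∈ V) :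
    zetaDimN (⋃ i, fractalStage c V i) =
      ((Real.log V.ncard / Real.log c : ℝ) : EReal) := by
  have hV1 : 1 ≤ V.ncard :=
    (ncard_pos (((finite_Iio c).prod (finite_Iio c)).subset hV)).2 ⟨_, h0⟩
  apply zetaDimN_eq_of_tendsto
  refine tendsto_div_of_abs_sub_mul_le
    (tendsto_log_atTop.comp tendsto_natCast_atTop_atTop) (C := 2 * log V.ncard) ?_
  filter_upwards [eventually_ge_atTop c] with n hn
  apply abs_log_sub_le_of_pow_bounds (k := Nat.log c n) (by exact_mod_cast hc)
    (by exact_mod_cast hV1)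
  · exact_mod_cast Nat.pow_log_le_self c (by omega)
  · exact_mod_cast Nat.lt_pow_succ_log_self hc n
  · exact_mod_cast le_ncard_sep_iUnion_fractalStage hc hV h0 hn
  · exact_mod_cast ncard_sep_iUnion_fractalStage_le hc hV h0 n

theorem zetaDim_fractal (c : ℕ) (hc : 1 < c) (V : Set (ℕ × ℕ))
    (hV : V ⊆ Set.Iio c ×ˢ Set.Iio c) (h0 : (0, 0) ∈ V) (hcard : 1 ≤ V.ncard) :
    zetaDimN (⋃ i, fractalStage c V i) =
      ((Real.log V.ncard / Real.log c : ℝ) : EReal) :=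
  zetaDim_fractal_general c hc V hV h0
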